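/- Let C_n be the number of comparisons used by randomized Quicksort on n distinct elements, with pivots chosen uniformly at random, satisfying C_0 = 0 and the distributional recurrence C_n = C_{U−1} + C'_{n−U} + n − 1 where U is uniform on {1,…,n} and C_{U−1}, C'_{n−U} are independent copies. Then Var(C_n) = 7n² − 4(n+1)²H_n^{(2)} − 2(n+1)H_n + 13n, where H_n is the n-th harmonic number and H_n^{(2)} the n-th harmonic number of order 2. -/

import Mathlib

open Finset

noncomputable def H (n : ℕ) : ℝ := ∑ i ∈ Finset.Icc 1 n, (1:ℝ)/i
noncomputable def H2 (n : ℕ) : ℝ := ∑ i ∈ Finset.Icc 1 n, (1:ℝ)/(i:ℝ)^2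

/-!
Let `Pₙ = ∑ₖ P(Cₙ = k) Xᵏ`. The recurrence says `P_{N+1} = X^N / (N + 1) · ∑_{i+j=N} Pᵢ Pⱼ`, so
`Pₙ` is a polynomial of degree at most `n(n-1)/2` and `E[Cₙʳ] = (θʳ Pₙ)(1)` for the Euler operator
`θ = X d/dX`. As `θ` is a derivation with `θ X^N = N X^N`, applying it once and twice turns the
recurrence into `E[C_{N+1}] = E[C_U + C'_{N-U} + N]` and the analogous identity for
`E[(C_U + C'_{N-U} + N)²]`, with `U` uniform on `{0, …, N}`. It then remains to check that
`2(n+1)Hₙ - 4n` and the claimed variance plus its square satisfy these recurrences; the convolutions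
over `i + j = n` that appear all reduce to `∑_{i+j=n} Hᵢ Hⱼ = (n+1)(Hₙ² - Hₙ⁽²⁾) - 2nHₙ + 2n`.
-/

open Polynomial

lemma sum_antidiagonal_snd {M : Type*} [AddCommMonoid M] (u : ℕ → M) (n : ℕ) :
    ∑ ij ∈ antidiagonal n, u ij.2 = ∑ ij ∈ antidiagonal n, u ij.1 :=
  Nat.sum_antidiagonal_swap (f := fun ij => u ij.1)

lemma sum_antidiagonal_fst_mul_mul {K : Type*} [Field K] [CharZero K] (u : ℕ → K) (n : ℕ) :
    ∑ ij ∈ antidiagonal n, (ij.1 : K) * (u ij.1 * u ij.2)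
      = n / 2 * ∑ ij ∈ antidiagonal n, u ij.1 * u ij.2 := by
  have hswap : ∑ ij ∈ antidiagonal n, (ij.2 : K) * (u ij.1 * u ij.2)
      = ∑ ij ∈ antidiagonal n, (ij.1 : K) * (u ij.1 * u ij.2) := by
    rw [← Nat.sum_antidiagonal_swap]
    exact sum_congr rfl fun _ _ => by simp only [Prod.fst_swap, Prod.snd_swap]; ring
  have hsum : ∑ ij ∈ antidiagonal n, ((ij.1 : K) + ij.2) * (u ij.1 * u ij.2)
      = n * ∑ ij ∈ antidiagonal n, u ij.1 * u ij.2 := by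
    rw [mul_sum]
    refine sum_congr rfl fun ij hij => ?_
    rw [← mem_antidiagonal.mp hij]
    push_cast; ring
  simp only [add_mul, sum_add_distrib, hswap] at hsum
  linear_combination hsum / 2

lemma sum_Icc_one_eq_sum_antidiagonal {M : Type*} [AddCommMonoid M] (f : ℕ → ℕ → M) (N : ℕ) :
    ∑ m ∈ Icc 1 (N + 1), f (m - 1) (N + 1 - m) = ∑ ij ∈ antidiagonal N, f ij.1 ij.2 := by
  rw [Nat.sum_antidiagonal_eq_sum_range_succ f, ← Ico_add_one_right_eq_Icc, sum_Ico_eq_sum_range]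
  refine sum_congr (by simp) fun j _ => ?_
  congr 1 <;> omega

lemma choose_two_add_choose_two_le (i j : ℕ) : i.choose 2 + j.choose 2 ≤ (i + j).choose 2 := by
  rw [Nat.add_choose_eq]
  simp [Nat.antidiagonal_succ]
  omega

lemma coeff_X_pow_mul_mul {R : Type*} [CommSemiring R] (A B : R[X]) (N k : ℕ) :
    (X ^ N * (A * B)).coeff k
      = ∑ j ∈ range (k + 1), if j + N ≤ k then A.coeff j * B.coeff (k - N - j) else 0 := by
  rw [coeff_X_pow_mul', coeff_mul,
    Nat.sum_antidiagonal_eq_sum_range_succ (fun i j => A.coeff i * B.coeff j)]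
  split_ifs with hN
  · rw [← sum_filter]
    congr 1
    ext j
    simp only [mem_range, mem_filter]
    omega
  · exact (sum_eq_zero fun j _ => if_neg (by omega)).symm

section EulerOperator

variable {R : Type*} [CommSemiring R]

noncomputable def eulerOp : R[X] →ₗ[R] R[X] := LinearMap.mulLeft R X ∘ₗ derivative

lemma eulerOp_apply (P : R[X]) : eulerOp P = X * derivative P := rfl

lemma coeff_eulerOp (P : R[X]) (k : ℕ) : (eulerOp P).coeff k = k * P.coeff k := by
  rcases k with _ | k
  · simp [eulerOp_apply]
  · rw [eulerOp_apply, coeff_X_mul, coeff_derivative]; push_cast; ring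

lemma coeff_iterate_eulerOp (P : R[X]) (r k : ℕ) :
    (eulerOp^[r] P).coeff k = (k : R) ^ r * P.coeff k := by
  induction r with
  | zero => simp
  | succ r ih => rw [Function.iterate_succ_apply', coeff_eulerOp, ih]; ring

lemma sum_range_pow_mul_coeff {P : R[X]} {K : ℕ} (hK : P.natDegree < K) (r : ℕ) :
    ∑ k ∈ range K, (k : R) ^ r * P.coeff k = (eulerOp^[r] P).eval 1 := by
  have hdeg : (eulerOp^[r] P).natDegree < K := by
    refine lt_of_le_of_lt (natDegree_le_iff_coeff_eq_zero.mpr fun k hk => ?_) hK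
    rw [coeff_iterate_eulerOp, coeff_eq_zero_of_natDegree_lt hk, mul_zero]
  simp [eval_eq_sum_range' hdeg, coeff_iterate_eulerOp]

lemma eulerOp_mul (P Q : R[X]) : eulerOp (P * Q) = eulerOp P * Q + P * eulerOp Q := by
  simp only [eulerOp_apply, derivative_mul]; ring

lemma eulerOp_monomial (N : ℕ) (c : R) : eulerOp (monomial N c) = monomial N (N * c) := by
  ext k
  rw [coeff_eulerOp, coeff_monomial, coeff_monomial]
  split_ifs with h <;> simp [h]

lemma eval_one_eulerOp_mul (P Q : R[X]) :
    (eulerOp (P * Q)).eval 1 = (eulerOp P).eval 1 * Q.eval 1 + P.eval 1 * (eulerOp Q).eval 1 := by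
  rw [eulerOp_mul, eval_add, eval_mul, eval_mul]

lemma eval_one_eulerOp_eulerOp_mul (P Q : R[X]) :
    (eulerOp (eulerOp (P * Q))).eval 1 = (eulerOp (eulerOp P)).eval 1 * Q.eval 1
      + 2 * ((eulerOp P).eval 1 * (eulerOp Q).eval 1)
      + P.eval 1 * (eulerOp (eulerOp Q)).eval 1 := by
  rw [eulerOp_mul, map_add, eval_add, eval_one_eulerOp_mul, eval_one_eulerOp_mul]; ring

lemma eval_one_eulerOp_monomial_mul (N : ℕ) (c : R) (Q : R[X]) :
    (eulerOp (monomial N c * Q)).eval 1 = c * (N * Q.eval 1 + (eulerOp Q).eval 1) := by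
  rw [eval_one_eulerOp_mul, eulerOp_monomial]
  simp only [eval_monomial, one_pow]
  ring

lemma eval_one_eulerOp_eulerOp_monomial_mul (N : ℕ) (c : R) (Q : R[X]) :
    (eulerOp (eulerOp (monomial N c * Q))).eval 1
      = c * (N ^ 2 * Q.eval 1 + 2 * N * (eulerOp Q).eval 1 + (eulerOp (eulerOp Q)).eval 1) := by
  rw [eval_one_eulerOp_eulerOp_mul, eulerOp_monomial, eulerOp_monomial]
  simp only [eval_monomial, one_pow]
  ring

end EulerOperator

@[simp] lemma H_zero : H 0 = 0 := by simp [H]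

@[simp] lemma H2_zero : H2 0 = 0 := by simp [H2]

lemma H_succ (n : ℕ) : H (n + 1) = H n + 1 / (n + 1) := by
  rw [H, H, sum_Icc_succ_top (by omega)]; push_cast; ring

lemma H2_succ (n : ℕ) : H2 (n + 1) = H2 n + 1 / (n + 1) ^ 2 := by
  rw [H2, H2, sum_Icc_succ_top (by omega)]; push_cast; ring

lemma sum_antidiagonal_H_fst (n : ℕ) :
    ∑ ij ∈ antidiagonal n, H ij.1 = (n + 1) * H n - n := by
  induction n with
  | zero => simp
  | succ n ih => rw [Nat.sum_antidiagonal_succ', ih, H_succ]; push_cast; field_simp; ring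

lemma sum_antidiagonal_fst_mul_H_fst (n : ℕ) :
    ∑ ij ∈ antidiagonal n, (ij.1 : ℝ) * H ij.1 = n * (n + 1) / 2 * H n - n * (n - 1) / 4 := by
  induction n with
  | zero => simp
  | succ n ih => rw [Nat.sum_antidiagonal_succ', ih, H_succ]; push_cast; field_simp; ring

lemma sum_antidiagonal_fst_mul_H_snd (n : ℕ) :
    ∑ ij ∈ antidiagonal n, (ij.1 : ℝ) * H ij.2 = n * (n + 1) / 2 * H n - n * (3 * n + 1) / 4 := by
  have hswap := Nat.sum_antidiagonal_swap (n := n) (f := fun ij : ℕ × ℕ => (ij.1 : ℝ) * H ij.2)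
  simp only [Prod.fst_swap, Prod.snd_swap] at hswap
  have hcompl : ∀ ij ∈ antidiagonal n, (ij.2 : ℝ) * H ij.1 = n * H ij.1 - ij.1 * H ij.1 := by
    intro ij hij
    rw [← mem_antidiagonal.mp hij]; push_cast; ring
  rw [← hswap, sum_congr rfl hcompl, sum_sub_distrib, ← mul_sum, sum_antidiagonal_H_fst,
    sum_antidiagonal_fst_mul_H_fst]
  ring

lemma sum_antidiagonal_one_div_fst_add_one (n : ℕ) :
    ∑ ij ∈ antidiagonal n, 1 / ((ij.1 : ℝ) + 1) = H (n + 1) := by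
  induction n with
  | zero => simp [H_succ]
  | succ n ih => rw [Nat.sum_antidiagonal_succ', ih, H_succ (n + 1)]; push_cast; ring

lemma sum_antidiagonal_one_div_mul (n : ℕ) :
    ∑ ij ∈ antidiagonal n, 1 / (((ij.1 : ℝ) + 1) * ((ij.2 : ℝ) + 1)) = 2 * H (n + 1) / (n + 2) := by
  have hsplit : ∀ ij ∈ antidiagonal n, 1 / (((ij.1 : ℝ) + 1) * ((ij.2 : ℝ) + 1))
      = (1 / ((ij.1 : ℝ) + 1) + 1 / ((ij.2 : ℝ) + 1)) / (n + 2) := by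
    intro ij hij
    rw [← mem_antidiagonal.mp hij]
    push_cast
    field_simp
    ring
  rw [sum_congr rfl hsplit, ← sum_div, sum_add_distrib,
    sum_antidiagonal_snd (fun j => 1 / ((j : ℝ) + 1)), sum_antidiagonal_one_div_fst_add_one]
  ring

lemma sum_antidiagonal_H_div (n : ℕ) :
    ∑ ij ∈ antidiagonal n, H ij.1 / ((ij.2 : ℝ) + 1) = H (n + 1) ^ 2 - H2 (n + 1) := by
  induction n with
  | zero => simp [H_succ, H2_succ]
  | succ n ih =>
    have hstep : ∀ ij ∈ antidiagonal n, H (ij.1 + 1) / ((ij.2 : ℝ) + 1)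
        = H ij.1 / ((ij.2 : ℝ) + 1) + 1 / (((ij.1 : ℝ) + 1) * ((ij.2 : ℝ) + 1)) := by
      intro ij _
      rw [H_succ]; field_simp
    rw [Nat.sum_antidiagonal_succ, sum_congr rfl hstep, sum_add_distrib, ih,
      sum_antidiagonal_one_div_mul, H_succ (n + 1), H2_succ (n + 1), H_zero]
    push_cast
    field_simp
    ring

lemma sum_antidiagonal_H_mul_H (n : ℕ) :
    ∑ ij ∈ antidiagonal n, H ij.1 * H ij.2
      = (n + 1) * (H n ^ 2 - H2 n) - 2 * n * H n + 2 * n := by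
  induction n with
  | zero => simp
  | succ n ih =>
    have hstep : ∀ ij ∈ antidiagonal n, H ij.1 * H (ij.2 + 1)
        = H ij.1 * H ij.2 + H ij.1 / ((ij.2 : ℝ) + 1) := by
      intro ij _
      rw [H_succ]; ring
    rw [Nat.sum_antidiagonal_succ', sum_congr rfl hstep, sum_add_distrib, ih,
      sum_antidiagonal_H_div, H_succ, H2_succ, H_zero]
    push_cast
    field_simp
    ring

namespace Quicksort

noncomputable def mean (n : ℕ) : ℝ := 2 * (n + 1) * H n - 4 * n

noncomputable def variance (n : ℕ) : ℝ :=
  7 * (n : ℝ) ^ 2 - 4 * ((n : ℝ) + 1) ^ 2 * H2 n - 2 * ((n : ℝ) + 1) * H n + 13 * (n : ℝ)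

noncomputable def secondMoment (n : ℕ) : ℝ := variance n + mean n ^ 2

@[simp] lemma mean_zero : mean 0 = 0 := by simp [mean]

@[simp] lemma secondMoment_zero : secondMoment 0 = 0 := by simp [secondMoment, variance]

lemma mean_succ (n : ℕ) : mean (n + 1) = mean n + 2 * H (n + 1) - 2 := by
  rw [mean, mean, H_succ]; push_cast; field_simp; ring

lemma sum_antidiagonal_mean_fst (n : ℕ) :
    ∑ ij ∈ antidiagonal n, mean ij.1 = (n + 1) * (n + 2) * H n - n * (5 * n + 7) / 2 := by
  induction n with
  | zero => simp
  | succ n ih => rw [Nat.sum_antidiagonal_succ', ih, mean, H_succ]; push_cast; field_simp; ring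

lemma sum_antidiagonal_mean_mul_H (n : ℕ) :
    ∑ ij ∈ antidiagonal n, mean ij.1 * H ij.2
      = (n + 1) * (n + 2) * (H n ^ 2 - H2 n) - 2 * n * (2 * n + 3) * H n + 5 * n * (n + 1) := by
  have hterm : ∀ ij ∈ antidiagonal n, mean ij.1 * H ij.2 = 2 * ((ij.1 : ℝ) * (H ij.1 * H ij.2))
      + 2 * (H ij.1 * H ij.2) - 4 * ((ij.1 : ℝ) * H ij.2) := by
    intro ij _
    rw [mean]; ring
  rw [sum_congr rfl hterm, sum_sub_distrib, sum_add_distrib, ← mul_sum, ← mul_sum, ← mul_sum,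
    sum_antidiagonal_fst_mul_mul, sum_antidiagonal_H_mul_H, sum_antidiagonal_fst_mul_H_snd]
  ring

/- Since `mean (j + 1) = mean j + 2 H (j + 1) - 2`, each step of the induction only needs the
convolution of `mean` with `H`. -/
lemma sum_antidiagonal_mean_mul_mean (n : ℕ) :
    ∑ ij ∈ antidiagonal n, mean ij.1 * mean ij.2
      = 2 / 3 * (n + 1) * (n + 2) * (n + 3) * (H n ^ 2 - H2 n)
        - 2 * n / 9 * (17 * n ^ 2 + 66 * n + 61) * H n
        + n / 27 * (169 * n ^ 2 + 438 * n + 257) := by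
  induction n with
  | zero => simp
  | succ n ih =>
    have hstep : ∀ ij ∈ antidiagonal n, mean ij.1 * mean (ij.2 + 1)
        = mean ij.1 * mean ij.2 + 2 * (mean ij.1 * H (ij.2 + 1)) - 2 * mean ij.1 := by
      intro ij _
      rw [mean_succ]; ring
    have hshift : ∑ ij ∈ antidiagonal n, mean ij.1 * H (ij.2 + 1)
        = ∑ ij ∈ antidiagonal (n + 1), mean ij.1 * H ij.2 := by
      rw [Nat.sum_antidiagonal_succ' (n := n), H_zero, mul_zero, zero_add]
    rw [Nat.sum_antidiagonal_succ', mean_zero, mul_zero, zero_add, sum_congr rfl hstep,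
      sum_sub_distrib, sum_add_distrib, ← mul_sum, ← mul_sum, hshift, ih,
      sum_antidiagonal_mean_mul_H, sum_antidiagonal_mean_fst, H_succ, H2_succ]
    push_cast
    field_simp
    ring

lemma sum_antidiagonal_secondMoment_fst (n : ℕ) :
    ∑ ij ∈ antidiagonal n, secondMoment ij.1
      = 2 / 3 * (n + 1) * (n + 2) * (2 * n + 3) * (H n ^ 2 - H2 n)
        - (56 * n ^ 3 + 183 * n ^ 2 + 157 * n + 18) / 9 * H n
        + n / 54 * (526 * n ^ 2 + 1257 * n + 701) := by
  induction n with
  | zero => simp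
  | succ n ih =>
    rw [Nat.sum_antidiagonal_succ', ih, secondMoment, variance, mean, H_succ, H2_succ]
    push_cast
    field_simp
    ring

lemma mean_succ_eq_average (N : ℕ) :
    mean (N + 1)
      = 1 / (N + 1) * (N * (N + 1) + ∑ ij ∈ antidiagonal N, (mean ij.1 + mean ij.2)) := by
  rw [sum_add_distrib, sum_antidiagonal_snd mean, sum_antidiagonal_mean_fst, mean, H_succ]
  push_cast
  field_simp
  ring

lemma secondMoment_succ_eq_average (N : ℕ) :
    secondMoment (N + 1) = 1 / (N + 1) * (N ^ 2 * (N + 1)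
      + 2 * N * ∑ ij ∈ antidiagonal N, (mean ij.1 + mean ij.2)
      + ∑ ij ∈ antidiagonal N,
          (secondMoment ij.1 + 2 * (mean ij.1 * mean ij.2) + secondMoment ij.2)) := by
  simp only [sum_add_distrib, ← mul_sum]
  rw [sum_antidiagonal_snd mean, sum_antidiagonal_snd secondMoment, sum_antidiagonal_mean_fst,
    sum_antidiagonal_secondMoment_fst, sum_antidiagonal_mean_mul_mean, secondMoment, variance,
    mean, H_succ, H2_succ]
  push_cast
  field_simp
  ring

/- `pgf n = ∑ₖ P(Cₙ = k) Xᵏ`; the summation index `i` is the rank of the pivot minus one. -/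
noncomputable def pgf : ℕ → ℝ[X]
  | 0 => 1
  | N + 1 => monomial N (1 / (N + 1 : ℝ)) * ∑ i : Fin (N + 1), pgf i * pgf (N - i)

lemma pgf_zero : pgf 0 = 1 := by rw [pgf]

lemma pgf_succ (N : ℕ) :
    pgf (N + 1) = monomial N (1 / (N + 1 : ℝ)) * ∑ ij ∈ antidiagonal N, pgf ij.1 * pgf ij.2 := by
  rw [pgf, Fin.sum_univ_eq_sum_range (fun i => pgf i * pgf (N - i)),
    Nat.sum_antidiagonal_eq_sum_range_succ (fun i j => pgf i * pgf j)]

lemma natDegree_pgf_le (n : ℕ) : (pgf n).natDegree ≤ n.choose 2 := by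
  induction n using Nat.strong_induction_on with
  | _ n ih =>
    rcases n with _ | N
    · simp [pgf_zero]
    · have hsum : (∑ ij ∈ antidiagonal N, pgf ij.1 * pgf ij.2).natDegree ≤ N.choose 2 := by
        refine natDegree_sum_le_of_forall_le _ _ fun ij hij => natDegree_mul_le.trans ?_
        have h := choose_two_add_choose_two_le ij.1 ij.2
        rw [mem_antidiagonal.mp hij] at h
        have h1 := ih ij.1 (Nat.antidiagonal.fst_lt hij)
        have h2 := ih ij.2 (Nat.antidiagonal.snd_lt hij)
        omega
      rw [pgf_succ, Nat.choose_succ_succ', Nat.choose_one_right]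
      exact natDegree_mul_le.trans (add_le_add (natDegree_monomial_le _) hsum)

theorem coeff_pgf {p : ℕ → ℕ → ℝ}
    (h0 : ∀ k, p 0 k = if k = 0 then 1 else 0)
    (hrec : ∀ n, 1 ≤ n → ∀ k, p n k =
      (1/(n:ℝ)) * ∑ m ∈ Icc 1 n, ∑ j ∈ range (k+1),
        (if j + (n-1) ≤ k then p (m-1) j * p (n-m) (k - (n-1) - j) else 0))
    (n k : ℕ) : (pgf n).coeff k = p n k := by
  induction n using Nat.strong_induction_on generalizing k with
  | _ n ih =>
    rcases n with _ | N
    · rw [h0, pgf_zero, coeff_one]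
    · have hconv : ∀ ij ∈ antidiagonal N, (X ^ N * (pgf ij.1 * pgf ij.2)).coeff k
          = ∑ j ∈ range (k + 1), if j + N ≤ k then p ij.1 j * p ij.2 (k - N - j) else 0 := by
        intro ij hij
        simp only [coeff_X_pow_mul_mul, ih ij.1 (Nat.antidiagonal.fst_lt hij),
          ih ij.2 (Nat.antidiagonal.snd_lt hij)]
      rw [hrec (N + 1) (by omega) k, Nat.add_sub_cancel,
        sum_Icc_one_eq_sum_antidiagonal (fun a b => ∑ j ∈ range (k + 1),
          if j + N ≤ k then p a j * p b (k - N - j) else 0),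
        pgf_succ, ← C_mul_X_pow_eq_monomial, mul_assoc, coeff_C_mul,
        mul_sum (a := (X ^ N : ℝ[X])), finsetSum_coeff, sum_congr rfl hconv]
      push_cast
      rfl

theorem moments_pgf (n : ℕ) :
    (pgf n).eval 1 = 1 ∧ (eulerOp (pgf n)).eval 1 = mean n
      ∧ (eulerOp (eulerOp (pgf n))).eval 1 = secondMoment n := by
  induction n using Nat.strong_induction_on with
  | _ n ih =>
    rcases n with _ | N
    · simp [pgf_zero, eulerOp_apply]
    · have hsub : ∀ ij ∈ antidiagonal N, _ := fun ij hij =>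
        And.intro (ih ij.1 (Nat.antidiagonal.fst_lt hij)) (ih ij.2 (Nat.antidiagonal.snd_lt hij))
      have hmass : (∑ ij ∈ antidiagonal N, pgf ij.1 * pgf ij.2).eval 1 = N + 1 := by
        have hterm : ∀ ij ∈ antidiagonal N, (pgf ij.1 * pgf ij.2).eval 1 = 1 := fun ij hij => by
          obtain ⟨⟨a0, -, -⟩, ⟨b0, -, -⟩⟩ := hsub ij hij
          rw [eval_mul, a0, b0, one_mul]
        rw [eval_finsetSum, sum_congr rfl hterm, sum_const, Nat.card_antidiagonal, nsmul_one]
        push_cast; ring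
      have hmean : (eulerOp (∑ ij ∈ antidiagonal N, pgf ij.1 * pgf ij.2)).eval 1
          = ∑ ij ∈ antidiagonal N, (mean ij.1 + mean ij.2) := by
        rw [map_sum, eval_finsetSum]
        refine sum_congr rfl fun ij hij => ?_
        obtain ⟨⟨a0, a1, -⟩, ⟨b0, b1, -⟩⟩ := hsub ij hij
        rw [eval_one_eulerOp_mul, a0, a1, b0, b1]; ring
      have hsecond : (eulerOp (eulerOp (∑ ij ∈ antidiagonal N, pgf ij.1 * pgf ij.2))).eval 1
          = ∑ ij ∈ antidiagonal N,
              (secondMoment ij.1 + 2 * (mean ij.1 * mean ij.2) + secondMoment ij.2) := by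
        rw [map_sum, map_sum, eval_finsetSum]
        refine sum_congr rfl fun ij hij => ?_
        obtain ⟨⟨a0, a1, a2⟩, ⟨b0, b1, b2⟩⟩ := hsub ij hij
        rw [eval_one_eulerOp_eulerOp_mul, a0, a1, a2, b0, b1, b2]; ring
      refine ⟨?_, ?_, ?_⟩
      · rw [pgf_succ, eval_mul, eval_monomial, one_pow, mul_one, hmass]
        field_simp
      · rw [pgf_succ, eval_one_eulerOp_monomial_mul, hmass, hmean, mean_succ_eq_average]
      · rw [pgf_succ, eval_one_eulerOp_eulerOp_monomial_mul, hmass, hmean, hsecond,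
          secondMoment_succ_eq_average]

end Quicksort

theorem stmt17_general (p : ℕ → ℕ → ℝ)
    (h0 : ∀ k, p 0 k = if k = 0 then 1 else 0)
    (hrec : ∀ n, 1 ≤ n → ∀ k, p n k =
      (1/(n:ℝ)) * ∑ m ∈ Icc 1 n, ∑ j ∈ range (k+1),
        (if j + (n-1) ≤ k then p (m-1) j * p (n-m) (k - (n-1) - j) else 0))
    (n : ℕ) :
    (∑ k ∈ range (n*(n-1)/2 + 1), (k:ℝ)^2 * p n k)
      - (∑ k ∈ range (n*(n-1)/2 + 1), (k:ℝ) * p n k)^2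
    = 7*(n:ℝ)^2 - 4*((n:ℝ)+1)^2*H2 n - 2*((n:ℝ)+1)*H n + 13*(n:ℝ) := by
  have hdeg : (Quicksort.pgf n).natDegree < n * (n - 1) / 2 + 1 :=
    Nat.lt_succ_of_le (Nat.choose_two_right n ▸ Quicksort.natDegree_pgf_le n)
  obtain ⟨-, hmean, hsecond⟩ := Quicksort.moments_pgf n
  have hfirst := sum_range_pow_mul_coeff hdeg 1
  have hsquare := sum_range_pow_mul_coeff hdeg 2
  simp only [pow_one, Function.iterate_succ, Function.iterate_zero, Function.comp_apply, id_eq,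
    Quicksort.coeff_pgf h0 hrec] at hfirst hsquare
  rw [hfirst, hsquare, hmean, hsecond, Quicksort.secondMoment, Quicksort.variance]
  ring

theorem stmt17 (p : ℕ → ℕ → ℝ)
    (h0 : ∀ k, p 0 k = if k = 0 then 1 else 0)
    (hrec : ∀ n, 1 ≤ n → ∀ k, p n k =
      (1/(n:ℝ)) * ∑ m ∈ Icc 1 n, ∑ j ∈ range (k+1),
        (if j + (n-1) ≤ k then p (m-1) j * p (n-m) (k - (n-1) - j) else 0))
    (n : ℕ) (hn : 1 ≤ n) :
    (∑ k ∈ range (n*(n-1)/2 + 1), (k:ℝ)^2 * p n k)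
      - (∑ k ∈ range (n*(n-1)/2 + 1), (k:ℝ) * p n k)^2
    = 7*(n:ℝ)^2 - 4*((n:ℝ)+1)^2*H2 n - 2*((n:ℝ)+1)*H n + 13*(n:ℝ) :=
  stmt17_general p h0 hrec n
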